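/- arXiv:2010.01655 — 2 statements merged into one kernel-verified Lean document; each statement's English description precedes it below -/
import Mathlib

section
/- Let k ≥ 1, g ≥ k, and let (H_n) be the PLRS generated by [1,...,1 (g ones), 0,...,0 (k zeros), 2^{k+1}]. Then (H_n) is incomplete; moreover, Brown's criterion fails at the term H_{2g+3}, i.e., H_{2g+3} > 1 + Σ_{i=1}^{2g+2} H_i. -/
/-- A sequence of positive integers (indexed from 1) is complete if every positive
integer is a sum of distinct terms (each index used at most once). -/
def SeqComplete (a : ℕ → ℕ) : Prop :=
  ∀ N : ℕ, 0 < N → ∃ s : Finset ℕ, (∀ i ∈ s, 1 ≤ i) ∧ ∑ i ∈ s, a i = N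

/-- `H` is the positive linear recurrence sequence (PLRS) with coefficients
`c 1, …, c L` (indexed from 1). -/
def IsPLRS (L : ℕ) (c : ℕ → ℕ) (H : ℕ → ℕ) : Prop :=
  H 1 = 1 ∧
  (∀ n, 1 ≤ n → n < L → H (n + 1) = (∑ i ∈ Finset.Icc 1 n, c i * H (n + 1 - i)) + 1) ∧
  (∀ n, L ≤ n → H (n + 1) = ∑ i ∈ Finset.Icc 1 L, c i * H (n + 1 - i))

/-!
The ones at the front of the coefficient vector give `H (n + 1) = 1 + ∑ i ≤ n, H i` for
`n ≤ g`, so `H (n + 1) = 2 ^ n` there; since the coefficient `c (g + 1)` is `0`, the `+ 1` is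
lost at the next step and `H (g + 2) = ∑ i ≤ g + 1, H i`, whence
`∑ i ≤ g + 2, H i = 2 ^ (g + 2) - 2`. At `n = 2g + 2` the recurrence reads
`H (2g + 3) = H (g + 3) + ⋯ + H (2g + 2) + 2 ^ (k + 1) H (g + 2 - k)`, and the last term is
`2 ^ (g + 2)`, so `H (2g + 3)` exceeds `1 + ∑ i ≤ 2g + 2, H i` by one. As the sequence is
nondecreasing from index `g + k + 1` on, that number is not a sum of distinct terms.
-/

open Finset

lemma sum_Icc_one_reflect {M : Type*} [AddCommMonoid M] (f : ℕ → M) {m n : ℕ} (hmn : m ≤ n) :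
    ∑ i ∈ Icc 1 m, f (n + 1 - i) = ∑ j ∈ Icc (n + 1 - m) n, f j := by
  rw [← Ico_add_one_right_eq_Icc, sum_Ico_reflect f 1 (by omega), ← Ico_add_one_right_eq_Icc]
  congr 2
  omega

lemma sum_Icc_one_add_sum_Icc {M : Type*} [AddCommMonoid M] (f : ℕ → M) {m n : ℕ}
    (hmn : m ≤ n) : ∑ i ∈ Icc 1 m, f i + ∑ i ∈ Icc (m + 1) n, f i = ∑ i ∈ Icc 1 n, f i := by
  simpa only [← Icc_add_one_left_eq_Ioc, zero_add] using sum_Ioc_consecutive f (Nat.zero_le m) hmn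

lemma not_seqComplete_of_forall_lt {a : ℕ → ℕ} {n : ℕ}
    (h : ∀ m, n < m → 1 + ∑ i ∈ Icc 1 n, a i < a m) : ¬ SeqComplete a := by
  intro hc
  obtain ⟨s, hs_pos, hs_sum⟩ := hc (1 + ∑ i ∈ Icc 1 n, a i) (by omega)
  by_cases hlarge : ∃ m ∈ s, n < m
  · obtain ⟨m, hms, hnm⟩ := hlarge
    have := single_le_sum (fun i _ => Nat.zero_le (a i)) hms
    have := h m hnm
    omega
  · push Not at hlarge
    have hsub : s ⊆ Icc 1 n := fun i hi => mem_Icc.2 ⟨hs_pos i hi, hlarge i hi⟩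
    have := sum_le_sum_of_subset (f := a) hsub
    omega

lemma IsPLRS.le_succ {L : ℕ} {c H : ℕ → ℕ} (h : IsPLRS L c H) (hc : 1 ≤ c 1) (hL : 1 ≤ L)
    {n : ℕ} (hn : L ≤ n) : H n ≤ H (n + 1) := by
  rw [h.2.2 n hn]
  calc H n ≤ c 1 * H (n + 1 - 1) := by simpa using Nat.le_mul_of_pos_left (H n) hc
    _ ≤ ∑ i ∈ Icc 1 L, c i * H (n + 1 - i) :=
      single_le_sum (f := fun i => c i * H (n + 1 - i)) (fun _ _ => Nat.zero_le _)
        (mem_Icc.2 ⟨le_rfl, hL⟩)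

lemma IsPLRS.monotoneOn {L : ℕ} {c H : ℕ → ℕ} (h : IsPLRS L c H) (hc : 1 ≤ c 1) (hL : 1 ≤ L) :
    MonotoneOn H (Set.Ici L) :=
  monotoneOn_of_le_add_one Set.ordConnected_Ici fun _ _ hn _ => h.le_succ hc hL hn

def onesZerosCoeff (g k : ℕ) : ℕ → ℕ :=
  fun i => if i ≤ g then 1 else if i = g + k + 1 then 2 ^ (k + 1) else 0

lemma sum_onesZerosCoeff_mul (g k m : ℕ) (f : ℕ → ℕ) :
    ∑ i ∈ Icc 1 m, onesZerosCoeff g k i * f i =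
      ∑ i ∈ Icc 1 (min m g), f i + if g + k + 1 ≤ m then 2 ^ (k + 1) * f (g + k + 1) else 0 := by
  have hsplit : ∀ i, onesZerosCoeff g k i * f i =
      (if i ≤ g then f i else 0) + if g + k + 1 = i then 2 ^ (k + 1) * f i else 0 := by
    intro i
    unfold onesZerosCoeff
    split_ifs <;> omega
  have hfilter : (Icc 1 m).filter (· ≤ g) = Icc 1 (min m g) := by
    ext i
    simp only [mem_filter, mem_Icc]
    omega
  rw [sum_congr rfl fun i _ => hsplit i, sum_add_distrib, sum_ite_eq, ← sum_filter, hfilter]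
  congr 1
  simp only [mem_Icc]
  split_ifs <;> first | rfl | omega

namespace IsPLRS

variable {g k : ℕ} {H : ℕ → ℕ} (h : IsPLRS (g + k + 1) (onesZerosCoeff g k) H)
include h

lemma onesZeros_eq_sum_add_one_of_le {n : ℕ} (hn : n ≤ g) :
    H (n + 1) = ∑ i ∈ Icc 1 n, H i + 1 := by
  rcases Nat.eq_zero_or_pos n with rfl | hn_pos
  · simpa using h.1
  rw [h.2.1 n hn_pos (by omega), sum_onesZerosCoeff_mul g k n (fun i => H (n + 1 - i)),
    min_eq_left hn, if_neg (by omega), add_zero, sum_Icc_one_reflect H le_rfl,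
    Nat.add_sub_cancel_left]

lemma onesZeros_sum_add_one_eq_two_pow {n : ℕ} (hn : n ≤ g + 1) :
    ∑ i ∈ Icc 1 n, H i + 1 = 2 ^ n := by
  induction n with
  | zero => simp
  | succ n ih =>
    rw [sum_Icc_succ_top (by omega), h.onesZeros_eq_sum_add_one_of_le (by omega), pow_succ,
      ← ih (by omega)]
    ring

lemma onesZeros_eq_two_pow {n : ℕ} (hn : n ≤ g) : H (n + 1) = 2 ^ n := by
  rw [h.onesZeros_eq_sum_add_one_of_le hn, h.onesZeros_sum_add_one_eq_two_pow (by omega)]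

lemma onesZeros_apply_add_two (hk : 1 ≤ k) : H (g + 2) = ∑ i ∈ Icc 1 (g + 1), H i := by
  rw [h.2.1 (g + 1) (by omega) (by omega),
    sum_onesZerosCoeff_mul g k _ (fun i => H (g + 1 + 1 - i)), min_eq_right (by omega),
    if_neg (by omega), add_zero, sum_Icc_one_reflect H (by omega),
    ← sum_Icc_one_add_sum_Icc H (by omega : 1 ≤ g + 1), Icc_self, sum_singleton, h.1,
    show g + 1 + 1 - g = 1 + 1 by omega, add_comm]

lemma onesZeros_apply_two_mul_add_three (hk : 1 ≤ k) (hkg : k ≤ g + 1) :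
    H (2 * g + 3) = ∑ i ∈ Icc (g + 3) (2 * g + 2), H i + 2 ^ (g + 2) := by
  rw [h.2.2 (2 * g + 2) (by omega),
    sum_onesZerosCoeff_mul g k _ (fun i => H (2 * g + 2 + 1 - i)), min_eq_right (by omega),
    if_pos le_rfl, sum_Icc_one_reflect H (by omega),
    show 2 * g + 2 + 1 - g = g + 3 by omega,
    show 2 * g + 2 + 1 - (g + k + 1) = (g + 1 - k) + 1 by omega,
    h.onesZeros_eq_two_pow (by omega), ← pow_add, show k + 1 + (g + 1 - k) = g + 2 by omega]

lemma onesZeros_one_add_sum_lt (hk : 1 ≤ k) (hkg : k ≤ g + 1) :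
    1 + ∑ i ∈ Icc 1 (2 * g + 2), H i < H (2 * g + 3) := by
  have hfirst : ∑ i ∈ Icc 1 (g + 2), H i + 2 = 2 ^ (g + 2) := by
    have hpow := h.onesZeros_sum_add_one_eq_two_pow (le_refl (g + 1))
    rw [sum_Icc_succ_top (by omega), h.onesZeros_apply_add_two hk, pow_succ, ← hpow]
    ring
  have hsplit : ∑ i ∈ Icc 1 (g + 2), H i + ∑ i ∈ Icc (g + 3) (2 * g + 2), H i =
      ∑ i ∈ Icc 1 (2 * g + 2), H i := sum_Icc_one_add_sum_Icc H (by omega)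
  rw [h.onesZeros_apply_two_mul_add_three hk hkg]
  omega

end IsPLRS

theorem g_ones_k_zeros_two_pow_incomplete (g k : ℕ) (hk : 1 ≤ k) (hg : k ≤ g) (H : ℕ → ℕ)
    (h : IsPLRS (g + k + 1)
      (fun i => if i ≤ g then 1 else if i = g + k + 1 then 2 ^ (k + 1) else 0) H) :
    ¬ SeqComplete H ∧ H (2 * g + 3) > 1 + ∑ i ∈ Finset.Icc 1 (2 * g + 2), H i := by
  have hfail : 1 + ∑ i ∈ Icc 1 (2 * g + 2), H i < H (2 * g + 3) :=
    h.onesZeros_one_add_sum_lt hk (by omega)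
  have hmono : MonotoneOn H (Set.Ici (g + k + 1)) :=
    h.monotoneOn (by rw [if_pos (by omega)]) (by omega)
  refine ⟨not_seqComplete_of_forall_lt fun m hm => hfail.trans_le ?_, hfail⟩
  exact hmono (Set.mem_Ici.2 (by omega)) (Set.mem_Ici.2 (by omega)) hm
end

section
/- For k ≥ 1, the PLRS generated by [1,...,1 (k ones), 0, 3] is complete. -/
/-!
Writing `S n = H 1 + ⋯ + H n`, the recurrence says `H (n + 1) = S n + 1` for `n ≤ k`,
`H (k + 2) = S (k + 1)`, and `H (m + k + 3) = S (m + k + 2) - S (m + 2) + 3 H (m + 1)` later on.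
So `H` is nondecreasing (for `k ≥ 1` the window `S (m + k + 2) - S (m + 2)` contains
`H (m + k + 2)`), and Brown's criterion `H (n + 1) ≤ S n + 1` propagates by strong
induction: in the last case it reduces to `2 H (m + 1) ≤ S m + 1 + H (m + 2)`, which follows from
the criterion at `m` together with `H (m + 1) ≤ H (m + 2)`.
-/

open Finset

theorem exists_subset_Icc_sum_eq {a : ℕ → ℕ} (hb : ∀ n, a (n + 1) ≤ 1 + ∑ i ∈ Icc 1 n, a i)
    (n N : ℕ) (hN : N ≤ ∑ i ∈ Icc 1 n, a i) : ∃ s ⊆ Icc 1 n, ∑ i ∈ s, a i = N := by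
  induction n generalizing N with
  | zero => exact ⟨∅, empty_subset _, by simp_all⟩
  | succ n ih =>
    have hsub : Icc 1 n ⊆ Icc 1 (n + 1) := Icc_subset_Icc_right n.le_succ
    rw [sum_Icc_succ_top (by omega)] at hN
    by_cases hle : N ≤ ∑ i ∈ Icc 1 n, a i
    · obtain ⟨s, hs, hsum⟩ := ih N hle
      exact ⟨s, hs.trans hsub, hsum⟩
    · obtain ⟨s, hs, hsum⟩ := ih (N - a (n + 1)) (by omega)
      have hnew : n + 1 ∉ s := fun hmem => by simpa using hs hmem
      refine ⟨insert (n + 1) s, insert_subset (by simp) (hs.trans hsub), ?_⟩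
      rw [sum_insert hnew, hsum]
      have := hb n
      omega

/-- Brown's criterion. -/
theorem seqComplete_of_le_one_add_sum {a : ℕ → ℕ} (hpos : ∀ n, 1 ≤ n → 1 ≤ a n)
    (hb : ∀ n, a (n + 1) ≤ 1 + ∑ i ∈ Icc 1 n, a i) : SeqComplete a := by
  intro N _
  have hN : N ≤ ∑ i ∈ Icc 1 N, a i := by
    simpa using card_nsmul_le_sum (Icc 1 N) a 1 fun i hi => hpos i (mem_Icc.mp hi).1
  obtain ⟨s, hs, hsum⟩ := exists_subset_Icc_sum_eq hb N N hN
  exact ⟨s, fun i hi => (mem_Icc.mp (hs hi)).1, hsum⟩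

theorem sum_Icc_sub_add_sum_Icc (f : ℕ → ℕ) {n p : ℕ} (hnp : n ≤ p) :
    ∑ i ∈ Icc 1 n, f (p + 1 - i) + ∑ i ∈ Icc 1 (p - n), f i = ∑ i ∈ Icc 1 p, f i := by
  induction n with
  | zero => simp
  | succ n ih =>
    rw [sum_Icc_succ_top (by omega), ← ih (by omega),
      show p - n = p - (n + 1) + 1 by omega, sum_Icc_succ_top (by omega),
      show p + 1 - (n + 1) = p - (n + 1) + 1 by omega]
    ring

theorem le_or_eq_succ_or_exists_eq_add_add_two (k n : ℕ) :
    n ≤ k ∨ n = k + 1 ∨ ∃ m, n = m + k + 2 := by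
  rcases lt_or_ge n (k + 2) with h | h
  · omega
  · exact .inr (.inr ⟨n - (k + 2), by omega⟩)

def onesZeroThree (k i : ℕ) : ℕ := if i ≤ k then 1 else if i = k + 2 then 3 else 0

section onesZeroThree

variable {k : ℕ}

theorem sum_Icc_onesZeroThree_mul_of_le (f : ℕ → ℕ) {n : ℕ} (hn : n ≤ k) :
    ∑ i ∈ Icc 1 n, onesZeroThree k i * f i = ∑ i ∈ Icc 1 n, f i :=
  sum_congr rfl fun i hi => by simp [onesZeroThree, (mem_Icc.mp hi).2.trans hn]

theorem sum_Icc_onesZeroThree_mul_succ (f : ℕ → ℕ) :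
    ∑ i ∈ Icc 1 (k + 1), onesZeroThree k i * f i = ∑ i ∈ Icc 1 k, f i := by
  rw [sum_Icc_succ_top (by omega), sum_Icc_onesZeroThree_mul_of_le f le_rfl]
  simp [onesZeroThree]

theorem sum_Icc_onesZeroThree_mul_add_two (f : ℕ → ℕ) :
    ∑ i ∈ Icc 1 (k + 2), onesZeroThree k i * f i = ∑ i ∈ Icc 1 k, f i + 3 * f (k + 2) := by
  rw [sum_Icc_succ_top (by omega), sum_Icc_onesZeroThree_mul_succ]
  simp [onesZeroThree]

variable {H : ℕ → ℕ} (hH : IsPLRS (k + 2) (onesZeroThree k) H)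
include hH

theorem IsPLRS.onesZeroThree_succ_of_le {n : ℕ} (hn : n ≤ k) :
    H (n + 1) = ∑ i ∈ Icc 1 n, H i + 1 := by
  obtain ⟨h1, h2, -⟩ := hH
  rcases Nat.eq_zero_or_pos n with rfl | hn0
  · simpa using h1
  rw [h2 n hn0 (by omega), sum_Icc_onesZeroThree_mul_of_le _ hn,
    ← sum_Icc_sub_add_sum_Icc H le_rfl, Nat.sub_self]
  simp

theorem IsPLRS.onesZeroThree_add_two : H (k + 2) = ∑ i ∈ Icc 1 (k + 1), H i := by
  obtain ⟨h1, h2, -⟩ := hH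
  rw [h2 (k + 1) (by omega) (by omega), sum_Icc_onesZeroThree_mul_succ,
    ← sum_Icc_sub_add_sum_Icc H k.le_succ, show k + 1 - k = 1 by omega]
  simp [h1]

theorem IsPLRS.onesZeroThree_add_three (m : ℕ) :
    H (m + k + 3) + ∑ i ∈ Icc 1 (m + 2), H i = ∑ i ∈ Icc 1 (m + k + 2), H i + 3 * H (m + 1) := by
  obtain ⟨-, -, h3⟩ := hH
  rw [h3 (m + k + 2) (by omega), sum_Icc_onesZeroThree_mul_add_two,
    ← sum_Icc_sub_add_sum_Icc H (show k ≤ m + k + 2 by omega),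
    show m + k + 2 - k = m + 2 by omega, show m + k + 2 + 1 - (k + 2) = m + 1 by omega]
  ring

theorem IsPLRS.onesZeroThree_le_succ (hk : 1 ≤ k) {n : ℕ} (hn : 1 ≤ n) : H n ≤ H (n + 1) := by
  obtain hnk | rfl | ⟨m, rfl⟩ := le_or_eq_succ_or_exists_eq_add_add_two k n
  · have := single_le_sum (fun i _ => Nat.zero_le (H i)) (mem_Icc.mpr ⟨hn, le_rfl⟩)
    rw [hH.onesZeroThree_succ_of_le hnk]
    omega
  · have := single_le_sum (fun i _ => Nat.zero_le (H i)) (mem_Icc.mpr ⟨hn, le_rfl⟩)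
    rwa [hH.onesZeroThree_add_two]
  · have hwindow : ∑ i ∈ Icc 1 (m + 2), H i + H (m + k + 2) ≤ ∑ i ∈ Icc 1 (m + k + 2), H i :=
      calc ∑ i ∈ Icc 1 (m + 2), H i + H (m + k + 2)
          ≤ ∑ i ∈ Icc 1 (m + k + 1), H i + H (m + k + 2) :=
            Nat.add_le_add_right (sum_le_sum_of_subset (Icc_subset_Icc_right (by omega))) _
        _ = ∑ i ∈ Icc 1 (m + k + 2), H i := (sum_Icc_succ_top (by omega) H).symm
    have hrec := hH.onesZeroThree_add_three m
    show H (m + k + 2) ≤ H (m + k + 3)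
    omega

theorem IsPLRS.onesZeroThree_pos (hk : 1 ≤ k) {n : ℕ} (hn : 1 ≤ n) : 1 ≤ H n := by
  induction n, hn using Nat.le_induction with
  | base => exact hH.1.ge
  | succ n hn ih => exact ih.trans (hH.onesZeroThree_le_succ hk hn)

theorem IsPLRS.onesZeroThree_succ_le_one_add_sum (hk : 1 ≤ k) (n : ℕ) :
    H (n + 1) ≤ 1 + ∑ i ∈ Icc 1 n, H i := by
  induction n using Nat.strong_induction_on with
  | _ n ih =>
    obtain hnk | rfl | ⟨m, rfl⟩ := le_or_eq_succ_or_exists_eq_add_add_two k n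
    · rw [hH.onesZeroThree_succ_of_le hnk]
      omega
    · rw [hH.onesZeroThree_add_two]
      omega
    · have hrec := hH.onesZeroThree_add_three m
      have hprev := ih m (by omega)
      have hmono := hH.onesZeroThree_le_succ hk (n := m + 1) (by omega)
      rw [sum_Icc_succ_top (by omega), sum_Icc_succ_top (by omega)] at hrec
      show H (m + k + 3) ≤ _
      omega

end onesZeroThree

theorem k_ones_zero_three_complete (k : ℕ) (hk : 1 ≤ k) (H : ℕ → ℕ)
    (h : IsPLRS (k + 2) (fun i => if i ≤ k then 1 else if i = k + 2 then 3 else 0) H) :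
    SeqComplete H :=
  seqComplete_of_le_one_add_sum (fun _ hn => h.onesZeroThree_pos hk hn)
    (h.onesZeroThree_succ_le_one_add_sum hk)
end
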